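/- Let X be a measure space, h : X → ℝ^{d+1} measurable (paravector valued), and s a paravector. Then the operator Q_s[M_h] = M_h² - 2 s_0 M_h + |s|² (with domain dom(M_h²)) equals the multiplication operator M_{h² - 2 s_0 h + |s|²}, including equality of domains. -/

import Mathlib

noncomputable section

open scoped BigOperators

/-- The negative-definite quadratic form on `Fin d → ℝ`, so that the Clifford
algebra generators satisfy `eᵢ² = -1` and anticommute. -/
def negQ (d : ℕ) : QuadraticForm ℝ (Fin d → ℝ) :=
  QuadraticMap.weightedSumSquares ℝ (fun _ : Fin d => (-1 : ℝ))

/-- The real Clifford algebra ℝ_d. -/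
abbrev Cl (d : ℕ) : Type := CliffordAlgebra (negQ d)

/-- The paravector `s₀ + s₁e₁ + ⋯ + s_d e_d`. -/
def pv {d : ℕ} (s₀ : ℝ) (v : Fin d → ℝ) : Cl d :=
  algebraMap ℝ (Cl d) s₀ + CliffordAlgebra.ι (negQ d) v

/-- The Clifford conjugate `s₀ - s₁e₁ - ⋯ - s_d e_d` of a paravector. -/
def pvConj {d : ℕ} (s₀ : ℝ) (v : Fin d → ℝ) : Cl d :=
  algebraMap ℝ (Cl d) s₀ - CliffordAlgebra.ι (negQ d) v

/-- The squared modulus `s₀² + s₁² + ⋯ + s_d²` of a paravector. -/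
def pvNormSq {d : ℕ} (s₀ : ℝ) (v : Fin d → ℝ) : ℝ := s₀ ^ 2 + ∑ i, v i ^ 2

/-- Clifford conjugation on ℝ_d (composite of involution and reversal). -/
def clConj {d : ℕ} (a : Cl d) : Cl d :=
  CliffordAlgebra.reverse (CliffordAlgebra.involute a)

open MeasureTheory

/-! Left multiplication by a paravector scales the norm, `|h f| = |h| |f|`, so the quadratic
`|h|²` controls everything: pointwise `|h|² |f| ≤ 2 |g f| + (4 s₀² + 2 |s|²) |f|` and
`|h| |f| ≤ |h|² |f| + |f|`. Hence `f, g f ∈ Lᵖ` force `h f, h² f ∈ Lᵖ`; the converse inclusion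
and the equality of the actions are the distributive law `(h² - 2 s₀ h + |s|²) f =
h (h f) - 2 s₀ h f + |s|² f`. -/

section TransportedNorm

variable {A E : Type*} [Ring A] [Algebra ℝ A] [NormedAddCommGroup E] [NormedSpace ℝ E]

theorem quadratic_mul (q a : A) (c m : ℝ) :
    (q * q - c • q + m • (1 : A)) * a = q * (q * a) - c • (q * a) + m • a := by
  simp only [add_mul, sub_mul, smul_mul_assoc, one_mul, mul_assoc]

theorem aestronglyMeasurable_transport_mul [FiniteDimensional ℝ E] (ℓ : A ≃ₗ[ℝ] E) {X : Type*}
    [MeasurableSpace X] {μ : Measure X} {u v : X → A}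
    (hu : AEStronglyMeasurable (fun x => ℓ (u x)) μ)
    (hv : AEStronglyMeasurable (fun x => ℓ (v x)) μ) :
    AEStronglyMeasurable (fun x => ℓ (u x * v x)) μ := by
  let B : E →L[ℝ] E →L[ℝ] E :=
    (((LinearMap.mul ℝ A).compl₁₂ ℓ.symm.toLinearMap ℓ.symm.toLinearMap).compr₂
      ℓ.toLinearMap).toContinuousBilinearMap
  have hB : ∀ a b : A, B (ℓ a) (ℓ b) = ℓ (a * b) := by simp [B]
  simpa only [hB] using B.continuous₂.comp_aestronglyMeasurable₂ hu hv

theorem norm_transport_mul_mul_le {ℓ : A ≃ₗ[ℝ] E} {q : A}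
    (hq : ∀ a, ‖ℓ (q * a)‖ = ‖ℓ q‖ * ‖ℓ a‖) (c m : ℝ) (a : A) :
    ‖ℓ (q * (q * a))‖ ≤ 2 * ‖ℓ ((q * q - c • q + m • (1 : A)) * a)‖
      + (c ^ 2 + 2 * |m|) * ‖ℓ a‖ := by
  have htri : ‖ℓ q‖ ^ 2 * ‖ℓ a‖ ≤ ‖ℓ ((q * q - c • q + m • (1 : A)) * a)‖
      + |c| * (‖ℓ q‖ * ‖ℓ a‖) + |m| * ‖ℓ a‖ := by
    have e : ℓ (q * (q * a)) = ℓ ((q * q - c • q + m • (1 : A)) * a)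
        + c • ℓ (q * a) - m • ℓ a := by
      rw [quadratic_mul, map_add, map_sub, map_smul, map_smul]
      abel
    calc ‖ℓ q‖ ^ 2 * ‖ℓ a‖ = ‖ℓ (q * (q * a))‖ := by rw [hq, hq]; ring
      _ ≤ _ := by
        rw [e, ← hq, ← Real.norm_eq_abs, ← Real.norm_eq_abs, ← norm_smul, ← norm_smul]
        exact norm_sub_le_of_le (norm_add_le _ _) le_rfl
  -- `|c| N ≤ (c² + N²) / 2` absorbs the middle term into the left-hand side.
  rw [hq, hq, ← mul_assoc, ← sq, ← sq_abs c]
  nlinarith [mul_nonneg (sq_nonneg (|c| - ‖ℓ q‖)) (norm_nonneg (ℓ a))]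

theorem norm_transport_mul_le {ℓ : A ≃ₗ[ℝ] E} {q : A}
    (hq : ∀ a, ‖ℓ (q * a)‖ = ‖ℓ q‖ * ‖ℓ a‖) (a : A) :
    ‖ℓ (q * a)‖ ≤ ‖ℓ (q * (q * a))‖ + ‖ℓ a‖ := by
  rw [hq, hq, hq]
  nlinarith [mul_nonneg (sq_nonneg (‖ℓ q‖ - 1)) (norm_nonneg (ℓ a)),
    mul_nonneg (norm_nonneg (ℓ q)) (norm_nonneg (ℓ a))]

variable {ℓ : A ≃ₗ[ℝ] E} {X : Type*} [MeasurableSpace X] {μ : Measure X} {p : ENNReal} {q f : X → A}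

theorem memLp_transport_quadratic_mul {c m : ℝ} (hf : MemLp (fun x => ℓ (f x)) p μ)
    (hqf : MemLp (fun x => ℓ (q x * f x)) p μ)
    (hqqf : MemLp (fun x => ℓ (q x * (q x * f x))) p μ) :
    MemLp (fun x => ℓ ((q x * q x - c • q x + m • (1 : A)) * f x)) p μ := by
  simp only [quadratic_mul, map_add, map_sub, map_smul]
  exact (hqqf.sub (hqf.const_smul c)).add (hf.const_smul m)

theorem memLp_transport_mul_of_quadratic_mul [FiniteDimensional ℝ E] {c m : ℝ}
    (hq : AEStronglyMeasurable (fun x => ℓ (q x)) μ)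
    (hmul : ∀ x a, ‖ℓ (q x * a)‖ = ‖ℓ (q x)‖ * ‖ℓ a‖) (hf : MemLp (fun x => ℓ (f x)) p μ)
    (hgf : MemLp (fun x => ℓ ((q x * q x - c • q x + m • (1 : A)) * f x)) p μ) :
    MemLp (fun x => ℓ (q x * f x)) p μ ∧ MemLp (fun x => ℓ (q x * (q x * f x))) p μ := by
  have hqf_meas := aestronglyMeasurable_transport_mul ℓ hq hf.aestronglyMeasurable
  have hqqf : MemLp (fun x => ℓ (q x * (q x * f x))) p μ := by
    refine ((hgf.norm.const_mul 2).add (hf.norm.const_mul (c ^ 2 + 2 * |m|))).of_le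
      (aestronglyMeasurable_transport_mul ℓ hq hqf_meas) (ae_of_all _ fun x => ?_)
    exact (norm_transport_mul_mul_le (hmul x) c m (f x)).trans (le_abs_self _)
  refine ⟨(hqqf.norm.add hf.norm).of_le hqf_meas (ae_of_all _ fun x => ?_), hqqf⟩
  exact (norm_transport_mul_le (hmul x) (f x)).trans (le_abs_self _)

end TransportedNorm

theorem qs_of_multiplication_operator {d : ℕ}
    {X : Type*} [MeasurableSpace X] (μ : Measure X)
    (ℓ : Cl d ≃ₗ[ℝ] EuclideanSpace ℝ (Fin (2 ^ d)))
    (hparamul : ∀ (t₀ : ℝ) (tv : Fin d → ℝ) (a : Cl d),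
      ‖ℓ (pv t₀ tv * a)‖ = ‖ℓ (pv t₀ tv)‖ * ‖ℓ a‖)
    (h₀ : X → ℝ) (hv : X → Fin d → ℝ)
    (hmeas : AEStronglyMeasurable (fun x => ℓ (pv (h₀ x) (hv x))) μ)
    (s₀ : ℝ) (sv : Fin d → ℝ) :
    -- the function `h` and the multiplier `g = h² - 2s₀h + |s|²`:
    (∀ f : X → Cl d,
      ((MemLp (fun x => ℓ (f x)) 2 μ ∧
        MemLp (fun x => ℓ (pv (h₀ x) (hv x) * f x)) 2 μ ∧
        MemLp (fun x => ℓ (pv (h₀ x) (hv x) * (pv (h₀ x) (hv x) * f x))) 2 μ) ↔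
       (MemLp (fun x => ℓ (f x)) 2 μ ∧
        MemLp (fun x => ℓ ((pv (h₀ x) (hv x) * pv (h₀ x) (hv x)
          - (2 * s₀) • pv (h₀ x) (hv x)
          + pvNormSq s₀ sv • (1 : Cl d)) * f x)) 2 μ))) ∧
    -- equality of the actions:
    (∀ (f : X → Cl d) (x : X),
      pv (h₀ x) (hv x) * (pv (h₀ x) (hv x) * f x)
        - (2 * s₀) • (pv (h₀ x) (hv x) * f x) + pvNormSq s₀ sv • f x
      = (pv (h₀ x) (hv x) * pv (h₀ x) (hv x) - (2 * s₀) • pv (h₀ x) (hv x)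
          + pvNormSq s₀ sv • (1 : Cl d)) * f x) := by
  refine ⟨fun f => ⟨?_, ?_⟩, fun f x => (quadratic_mul _ _ _ _).symm⟩
  · rintro ⟨hf, hqf, hqqf⟩
    exact ⟨hf, memLp_transport_quadratic_mul hf hqf hqqf⟩
  · rintro ⟨hf, hgf⟩
    exact ⟨hf, memLp_transport_mul_of_quadratic_mul hmeas (fun x => hparamul (h₀ x) (hv x))
      hf hgf⟩
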